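/- Let X be a real n×p matrix, y ∈ ℝⁿ, λ₂ > 0, and k a positive integer. Suppose M₁ > 0 is a restricted smoothness parameter of L_ridge with support size 1, m_{2k} > 0 is a restricted strong convexity parameter of L_ridge with support size 2k, and m_{2k} ≤ k·M₁. Let β* be a minimizer of L_ridge over {β ∈ ℝᵖ : ‖β‖₀ ≤ k}. Let β⁰, β¹, …, β^k ∈ ℝᵖ be a sequence such that β⁰ = 0; for every 0 ≤ t ≤ k, ‖βᵗ‖₀ ≤ t and ∇_j L_ridge(βᵗ) = 0 for all j ∈ supp(βᵗ); and for every 0 ≤ t < k, L_ridge(β^{t+1}) ≤ inf_{j ∈ {1,…,p}, α ∈ ℝ} L_ridge(βᵗ + α e_j). Then L_ridge(β*) ≤ L_ridge(β^k) ≤ (1 − e^{−m_{2k}/M₁}) · L_ridge(β*). -/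

import Mathlib

open Matrix

noncomputable section

/-- The ridge loss `L_ridge(β) = βᵀXᵀXβ − 2yᵀXβ + λ₂‖β‖₂²`. -/
def Lridge {n p : ℕ} (X : Matrix (Fin n) (Fin p) ℝ) (y : Fin n → ℝ) (lam2 : ℝ)
    (β : Fin p → ℝ) : ℝ :=
  β ⬝ᵥ (Xᵀ * X).mulVec β - 2 * (y ⬝ᵥ X.mulVec β) + lam2 * ∑ j, (β j) ^ 2

/-- The gradient `∇L_ridge(β) = 2Xᵀ(Xβ − y) + 2λ₂β`. -/
def gradLridge {n p : ℕ} (X : Matrix (Fin n) (Fin p) ℝ) (y : Fin n → ℝ) (lam2 : ℝ)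
    (β : Fin p → ℝ) : Fin p → ℝ :=
  (2 : ℝ) • Xᵀ.mulVec (X.mulVec β - y) + (2 * lam2) • β

lemma Lridge_zero {n p : ℕ} (X : Matrix (Fin n) (Fin p) ℝ) (y : Fin n → ℝ) (lam2 : ℝ) :
    Lridge X y lam2 0 = 0 := by
  simp [Lridge]

/-- Exact second-order expansion of the quadratic ridge loss. -/
lemma quad_id {n p : ℕ} (X : Matrix (Fin n) (Fin p) ℝ) (y : Fin n → ℝ) (lam2 : ℝ)
    (u w : Fin p → ℝ) :
    Lridge X y lam2 (u + w) = Lridge X y lam2 u + gradLridge X y lam2 u ⬝ᵥ w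
      + (w ⬝ᵥ (Xᵀ * X).mulVec w + lam2 * ∑ j, (w j) ^ 2) := by
  have key : ∀ a b : Fin p → ℝ, a ⬝ᵥ (Xᵀ * X).mulVec b = (X.mulVec a) ⬝ᵥ (X.mulVec b) := by
    intro a b
    rw [← Matrix.mulVec_mulVec, Matrix.dotProduct_mulVec, Matrix.vecMul_transpose]
  have hsum : ∑ j, (u j + w j) ^ 2 = ∑ j, (u j) ^ 2 + 2 * (u ⬝ᵥ w) + ∑ j, (w j) ^ 2 := by
    simp only [dotProduct, add_sq, Finset.sum_add_distrib, Finset.mul_sum]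
    ring_nf
  simp only [Lridge, gradLridge, key, mulVec_add, dotProduct_add, add_dotProduct,
    smul_dotProduct, Matrix.mulVec_sub, sub_dotProduct, dotProduct_sub, hsum,
    smul_eq_mul, Pi.smul_apply, Pi.add_apply]
  have h1 : (X.mulVec u) ⬝ᵥ (X.mulVec w) = (X.mulVec w) ⬝ᵥ (X.mulVec u) := dotProduct_comm _ _
  have h2 : Xᵀ.mulVec (X.mulVec u) ⬝ᵥ w = (X.mulVec u) ⬝ᵥ (X.mulVec w) := by
    rw [dotProduct_comm, Matrix.dotProduct_mulVec, Matrix.vecMul_transpose, dotProduct_comm]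
  have h3 : Xᵀ.mulVec y ⬝ᵥ w = y ⬝ᵥ X.mulVec w := by
    rw [dotProduct_comm, Matrix.dotProduct_mulVec, Matrix.vecMul_transpose, dotProduct_comm]
  rw [h2, h3]
  linarith [h1]

lemma ncard_support_add_single {p : ℕ} (v : Fin p → ℝ) (j : Fin p) (a : ℝ) :
    (Function.support (v + a • (Pi.single j 1 : Fin p → ℝ))).ncard
      ≤ (Function.support v).ncard + 1 := by
  have hsub : Function.support (v + a • (Pi.single j 1 : Fin p → ℝ))
      ⊆ Function.support v ∪ {j} := by
    intro x hx
    rcases eq_or_ne x j with rfl | hxj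
    · exact Set.mem_union_right _ rfl
    · left
      simp only [Function.mem_support, Pi.add_apply, Pi.smul_apply, smul_eq_mul,
        Pi.single_apply, if_neg hxj, mul_zero, add_zero] at hx
      exact hx
  calc (Function.support (v + a • (Pi.single j 1 : Fin p → ℝ))).ncard
      ≤ (Function.support v ∪ {j}).ncard := Set.ncard_le_ncard hsub (Set.toFinite _)
    _ ≤ (Function.support v).ncard + ({j} : Set (Fin p)).ncard := Set.ncard_union_le _ _
    _ = (Function.support v).ncard + 1 := by rw [Set.ncard_singleton]

lemma ncard_support_single {p : ℕ} (j : Fin p) (a : ℝ) :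
    (Function.support (a • (Pi.single j 1 : Fin p → ℝ))).ncard ≤ 1 := by
  have := ncard_support_add_single (0 : Fin p → ℝ) j a
  simpa using this

/-- Approximation guarantee for greedy/beam-search forward selection:
`L_ridge(β*) ≤ L_ridge(β^k) ≤ (1 − e^{−m_{2k}/M₁}) L_ridge(β*)`. -/
theorem stmt16 {n p : ℕ} (X : Matrix (Fin n) (Fin p) ℝ) (y : Fin n → ℝ)
    (lam2 : ℝ) (hlam2 : 0 < lam2) (k : ℕ) (hk : 0 < k)
    (M1 : ℝ) (hM1pos : 0 < M1)
    (hM1 : ∀ u v : Fin p → ℝ,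
      (Function.support u).ncard ≤ 1 → (Function.support v).ncard ≤ 1 →
      (Function.support (u - v)).ncard ≤ 1 →
      Lridge X y lam2 v
        ≤ Lridge X y lam2 u + gradLridge X y lam2 u ⬝ᵥ (v - u)
          + M1 / 2 * ∑ j, (v j - u j) ^ 2)
    (m2k : ℝ) (hm2kpos : 0 < m2k)
    (hrsc : ∀ u v : Fin p → ℝ,
      (Function.support u).ncard ≤ 2 * k → (Function.support v).ncard ≤ 2 * k →
      (Function.support (u - v)).ncard ≤ 2 * k →
      Lridge X y lam2 u + gradLridge X y lam2 u ⬝ᵥ (v - u)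
          + m2k / 2 * ∑ j, (v j - u j) ^ 2
        ≤ Lridge X y lam2 v)
    (hm2kM1 : m2k ≤ (k : ℝ) * M1)
    (βstar : Fin p → ℝ) (hβstar : (Function.support βstar).ncard ≤ k)
    (hβstarMin : ∀ γ : Fin p → ℝ, (Function.support γ).ncard ≤ k →
      Lridge X y lam2 βstar ≤ Lridge X y lam2 γ)
    (β : ℕ → Fin p → ℝ) (hβ0 : β 0 = 0)
    (hsparse : ∀ t ≤ k, (Function.support (β t)).ncard ≤ t)
    (hstat : ∀ t ≤ k, ∀ j, β t j ≠ 0 → gradLridge X y lam2 (β t) j = 0)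
    (hstep : ∀ t < k, Lridge X y lam2 (β (t + 1))
      ≤ ⨅ jα : Fin p × ℝ, Lridge X y lam2 (β t + jα.2 • (Pi.single jα.1 1 : Fin p → ℝ))) :
    Lridge X y lam2 βstar ≤ Lridge X y lam2 (β k) ∧
      Lridge X y lam2 (β k) ≤ (1 - Real.exp (-(m2k / M1))) * Lridge X y lam2 βstar := by
  have hfirst : Lridge X y lam2 βstar ≤ Lridge X y lam2 (β k) :=
    hβstarMin (β k) (hsparse k le_rfl)
  refine ⟨hfirst, ?_⟩
  have hβstar_nonpos : Lridge X y lam2 βstar ≤ 0 := by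
    have := hβstarMin 0 (by simp)
    rwa [Lridge_zero] at this
  rcases Nat.eq_zero_or_pos p with hp | hp
  · subst hp
    have h1 : β k = βstar := Subsingleton.elim _ _
    have h2 : βstar = 0 := Subsingleton.elim _ _
    rw [h1, h2, Lridge_zero, mul_zero]
  have hkpos : (0 : ℝ) < (k : ℝ) := by exact_mod_cast hk
  have hkM1 : (0 : ℝ) < (k : ℝ) * M1 := mul_pos hkpos hM1pos
  have hr_nonneg : 0 ≤ 1 - m2k / ((k : ℝ) * M1) := by
    rw [sub_nonneg, div_le_one hkM1]
    exact hm2kM1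
  -- per-step contraction
  have hstep1 : ∀ t, t < k → Lridge X y lam2 (β (t + 1)) - Lridge X y lam2 βstar
      ≤ (1 - m2k / ((k : ℝ) * M1)) * (Lridge X y lam2 (β t) - Lridge X y lam2 βstar) := by
    intro t ht
    have hsupp_u : (Function.support (β t)).ncard ≤ t := hsparse t ht.le
    have hδ_nonneg : 0 ≤ Lridge X y lam2 (β t) - Lridge X y lam2 βstar := by
      have := hβstarMin (β t) (le_trans hsupp_u ht.le)
      linarith
    -- RSC lower bound on the gradient mass over S
    have hS : 2 * m2k * (Lridge X y lam2 (β t) - Lridge X y lam2 βstar)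
        ≤ ∑ j ∈ Finset.univ.filter (fun j => βstar j ≠ 0),
            (gradLridge X y lam2 (β t) j) ^ 2 := by
      have h1 : Lridge X y lam2 (β t) + gradLridge X y lam2 (β t) ⬝ᵥ (βstar - β t)
          + m2k / 2 * ∑ j, (βstar j - β t j) ^ 2 ≤ Lridge X y lam2 βstar := by
        apply hrsc (β t) βstar
        · exact le_trans hsupp_u (by omega)
        · exact le_trans hβstar (by omega)
        · calc (Function.support (β t - βstar)).ncard
              ≤ (Function.support (β t) ∪ Function.support βstar).ncard :=
                Set.ncard_le_ncard (Function.support_sub (β t) βstar) (Set.toFinite _)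
            _ ≤ (Function.support (β t)).ncard + (Function.support βstar).ncard :=
                Set.ncard_union_le _ _
            _ ≤ 2 * k := by omega
      have hdot : gradLridge X y lam2 (β t) ⬝ᵥ (βstar - β t)
          = ∑ j, gradLridge X y lam2 (β t) j * (βstar j - β t j) := by
        simp [dotProduct]
      have h2 : ∑ j ∈ Finset.univ.filter (fun j => βstar j ≠ 0),
            (-(gradLridge X y lam2 (β t) j) ^ 2 / (2 * m2k))
          ≤ ∑ j, (gradLridge X y lam2 (β t) j * (βstar j - β t j)
              + m2k / 2 * (βstar j - β t j) ^ 2) := by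
        have hmono : ∑ j ∈ Finset.univ.filter (fun j => βstar j ≠ 0),
              (gradLridge X y lam2 (β t) j * (βstar j - β t j)
                + m2k / 2 * (βstar j - β t j) ^ 2)
            ≤ ∑ j, (gradLridge X y lam2 (β t) j * (βstar j - β t j)
                + m2k / 2 * (βstar j - β t j) ^ 2) := by
          apply Finset.sum_le_sum_of_subset_of_nonneg (Finset.subset_univ _)
          intro i _ hiS
          have hβi : βstar i = 0 := by
            by_contra hne
            exact hiS (by simp [hne])
          rcases eq_or_ne (β t i) 0 with hui | hui
          · simp [hβi, hui]
          · have hgi : gradLridge X y lam2 (β t) i = 0 := hstat t ht.le i hui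
            have : 0 ≤ m2k / 2 * (βstar i - β t i) ^ 2 := by positivity
            rw [hgi]; linarith
        refine le_trans (Finset.sum_le_sum ?_) hmono
        intro i _
        rw [div_le_iff₀ (show (0:ℝ) < 2 * m2k by linarith)]
        have hring : (gradLridge X y lam2 (β t) i * (βstar i - β t i)
              + m2k / 2 * (βstar i - β t i) ^ 2) * (2 * m2k)
            = (m2k * (βstar i - β t i) + gradLridge X y lam2 (β t) i) ^ 2
              - (gradLridge X y lam2 (β t) i) ^ 2 := by ring
        rw [hring]
        have := sq_nonneg (m2k * (βstar i - β t i) + gradLridge X y lam2 (β t) i)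
        linarith
      have h3 : ∑ j ∈ Finset.univ.filter (fun j => βstar j ≠ 0),
            (-(gradLridge X y lam2 (β t) j) ^ 2 / (2 * m2k))
          = -(∑ j ∈ Finset.univ.filter (fun j => βstar j ≠ 0),
              (gradLridge X y lam2 (β t) j) ^ 2) / (2 * m2k) := by
        rw [← Finset.sum_div]
        congr 1
        rw [← Finset.sum_neg_distrib]
      have h4 : ∑ j, (gradLridge X y lam2 (β t) j * (βstar j - β t j)
            + m2k / 2 * (βstar j - β t j) ^ 2)
          = gradLridge X y lam2 (β t) ⬝ᵥ (βstar - β t)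
            + m2k / 2 * ∑ j, (βstar j - β t j) ^ 2 := by
        rw [hdot, Finset.sum_add_distrib, ← Finset.mul_sum]
      rw [h3, h4] at h2
      have h5 : -(∑ j ∈ Finset.univ.filter (fun j => βstar j ≠ 0),
            (gradLridge X y lam2 (β t) j) ^ 2) / (2 * m2k)
          ≤ Lridge X y lam2 βstar - Lridge X y lam2 (β t) := by linarith
      rw [div_le_iff₀ (by linarith : (0:ℝ) < 2 * m2k)] at h5
      nlinarith
    -- best coordinate
    have hbest : ∃ j : Fin p, 2 * m2k * (Lridge X y lam2 (β t) - Lridge X y lam2 βstar)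
        ≤ (k : ℝ) * (gradLridge X y lam2 (β t) j) ^ 2 := by
      rcases (Finset.univ.filter (fun j => βstar j ≠ 0)).eq_empty_or_nonempty with hSe | hSne
      · refine ⟨⟨0, hp⟩, ?_⟩
        rw [hSe, Finset.sum_empty] at hS
        have : (0:ℝ) ≤ (k : ℝ) * (gradLridge X y lam2 (β t) ⟨0, hp⟩) ^ 2 := by positivity
        linarith
      · obtain ⟨j, hjS, hjmax⟩ :=
          (Finset.univ.filter (fun j => βstar j ≠ 0)).exists_max_image
            (fun j => (gradLridge X y lam2 (β t) j) ^ 2) hSne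
        refine ⟨j, ?_⟩
        have hcard : ((Finset.univ.filter (fun j => βstar j ≠ 0)).card : ℝ) ≤ (k : ℝ) := by
          have hset : Function.support βstar
              = ↑(Finset.univ.filter (fun j => βstar j ≠ 0)) := by
            ext x; simp [Function.mem_support]
          rw [hset, Set.ncard_coe_finset] at hβstar
          exact_mod_cast hβstar
        have hsum_le : ∑ i ∈ Finset.univ.filter (fun j => βstar j ≠ 0),
              (gradLridge X y lam2 (β t) i) ^ 2
            ≤ ((Finset.univ.filter (fun j => βstar j ≠ 0)).card : ℝ)
              * (gradLridge X y lam2 (β t) j) ^ 2 := by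
          have := Finset.sum_le_card_nsmul (Finset.univ.filter (fun j => βstar j ≠ 0))
            (fun i => (gradLridge X y lam2 (β t) i) ^ 2)
            ((gradLridge X y lam2 (β t) j) ^ 2) (fun i hi => hjmax i hi)
          simpa [nsmul_eq_mul] using this
        have hgj2 : (0:ℝ) ≤ (gradLridge X y lam2 (β t) j) ^ 2 := sq_nonneg _
        calc 2 * m2k * (Lridge X y lam2 (β t) - Lridge X y lam2 βstar)
            ≤ ∑ i ∈ Finset.univ.filter (fun j => βstar j ≠ 0),
                (gradLridge X y lam2 (β t) i) ^ 2 := hS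
          _ ≤ ((Finset.univ.filter (fun j => βstar j ≠ 0)).card : ℝ)
                * (gradLridge X y lam2 (β t) j) ^ 2 := hsum_le
          _ ≤ (k : ℝ) * (gradLridge X y lam2 (β t) j) ^ 2 := by nlinarith
    obtain ⟨j0, hj0⟩ := hbest
    set α : ℝ := -(gradLridge X y lam2 (β t) j0) / M1 with hα
    set w : Fin p → ℝ := α • (Pi.single j0 1 : Fin p → ℝ) with hw
    clear_value w
    clear_value α
    have hw2 : ∑ j, (w j) ^ 2 = α ^ 2 := by
      simp [hw, Pi.single_apply, ite_pow, Finset.sum_ite_eq', mul_pow]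
    -- smoothness bound on the quadratic form at w
    have hQw : w ⬝ᵥ (Xᵀ * X).mulVec w + lam2 * ∑ j, (w j) ^ 2 ≤ M1 / 2 * α ^ 2 := by
      have hL0 := quad_id X y lam2 0 w
      have hns : (Function.support w).ncard ≤ 1 := hw ▸ ncard_support_single j0 α
      have hM := hM1 0 w (by simp) hns
        (by simpa using hns)
      rw [zero_add] at hL0
      rw [hL0, Lridge_zero] at hM
      have hsub0 : ∑ j, (w j - (0 : Fin p → ℝ) j) ^ 2 = α ^ 2 := by
        simpa using hw2
      rw [hsub0] at hM
      have hwsub : w - (0 : Fin p → ℝ) = w := by simp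
      rw [hwsub] at hM
      linarith
    -- value at the candidate point
    have hcand : Lridge X y lam2 (β t + w)
        ≤ Lridge X y lam2 (β t) - (gradLridge X y lam2 (β t) j0) ^ 2 / (2 * M1) := by
      have hid := quad_id X y lam2 (β t) w
      have hgw : gradLridge X y lam2 (β t) ⬝ᵥ w = α * gradLridge X y lam2 (β t) j0 := by
        simp [hw, dotProduct, Pi.single_apply, mul_ite, Finset.sum_ite_eq', mul_comm]
      have hval : α * gradLridge X y lam2 (β t) j0 + M1 / 2 * α ^ 2
          = -(gradLridge X y lam2 (β t) j0) ^ 2 / (2 * M1) := by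
        rw [hα]; field_simp; ring
      rw [hid, hgw]
      rw [hw2] at hQw ⊢
      have h2 : α * gradLridge X y lam2 (β t) j0
            + (w ⬝ᵥ (Xᵀ * X).mulVec w + lam2 * α ^ 2)
          ≤ -(gradLridge X y lam2 (β t) j0) ^ 2 / (2 * M1) := by
        calc α * gradLridge X y lam2 (β t) j0
              + (w ⬝ᵥ (Xᵀ * X).mulVec w + lam2 * α ^ 2)
            ≤ α * gradLridge X y lam2 (β t) j0 + M1 / 2 * α ^ 2 := by linarith
          _ = -(gradLridge X y lam2 (β t) j0) ^ 2 / (2 * M1) := hval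
      have h3 : -(gradLridge X y lam2 (β t) j0) ^ 2 / (2 * M1)
          = -((gradLridge X y lam2 (β t) j0) ^ 2 / (2 * M1)) := by ring
      rw [h3] at h2
      linarith
    -- infimum bound
    have hbdd : BddBelow (Set.range fun jα : Fin p × ℝ =>
        Lridge X y lam2 (β t + jα.2 • (Pi.single jα.1 1 : Fin p → ℝ))) := by
      refine ⟨Lridge X y lam2 βstar, ?_⟩
      rintro x ⟨⟨j, a⟩, rfl⟩
      apply hβstarMin
      calc (Function.support (β t + a • (Pi.single j 1 : Fin p → ℝ))).ncard
          ≤ (Function.support (β t)).ncard + 1 := ncard_support_add_single _ _ _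
        _ ≤ k := by omega
    have hinf : Lridge X y lam2 (β (t + 1)) ≤ Lridge X y lam2 (β t + w) := by
      refine le_trans (hstep t ht) (le_trans (ciInf_le hbdd (j0, α)) ?_)
      rw [hw]
    -- combine
    have hkey : m2k / ((k : ℝ) * M1) * (Lridge X y lam2 (β t) - Lridge X y lam2 βstar)
        ≤ (gradLridge X y lam2 (β t) j0) ^ 2 / (2 * M1) := by
      rw [div_mul_eq_mul_div, div_le_div_iff₀ hkM1 (by linarith : (0:ℝ) < 2 * M1)]
      nlinarith [mul_le_mul_of_nonneg_right hj0 hM1pos.le]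
    have hfinal : Lridge X y lam2 (β (t + 1)) ≤ Lridge X y lam2 (β t)
        - m2k / ((k : ℝ) * M1) * (Lridge X y lam2 (β t) - Lridge X y lam2 βstar) := by
      linarith
    linarith
  -- iterate the contraction
  have hiter : ∀ t, t ≤ k → Lridge X y lam2 (β t) - Lridge X y lam2 βstar
      ≤ (1 - m2k / ((k : ℝ) * M1)) ^ t * (0 - Lridge X y lam2 βstar) := by
    intro t
    induction t with
    | zero => intro _; rw [hβ0, Lridge_zero]; simp
    | succ t ih =>
      intro ht
      have h1 := hstep1 t (by omega)
      have h2 := ih (by omega)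
      have h3 : (1 - m2k / ((k : ℝ) * M1))
            * (Lridge X y lam2 (β t) - Lridge X y lam2 βstar)
          ≤ (1 - m2k / ((k : ℝ) * M1)) * ((1 - m2k / ((k : ℝ) * M1)) ^ t
            * (0 - Lridge X y lam2 βstar)) :=
        mul_le_mul_of_nonneg_left h2 hr_nonneg
      calc Lridge X y lam2 (β (t + 1)) - Lridge X y lam2 βstar
          ≤ (1 - m2k / ((k : ℝ) * M1))
            * (Lridge X y lam2 (β t) - Lridge X y lam2 βstar) := h1
        _ ≤ (1 - m2k / ((k : ℝ) * M1)) * ((1 - m2k / ((k : ℝ) * M1)) ^ t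
            * (0 - Lridge X y lam2 βstar)) := h3
        _ = (1 - m2k / ((k : ℝ) * M1)) ^ (t + 1) * (0 - Lridge X y lam2 βstar) := by ring
  have hfin := hiter k le_rfl
  -- (1 - m2k/(k M1))^k ≤ exp(-(m2k/M1))
  have hrk : (1 - m2k / ((k : ℝ) * M1)) ^ k ≤ Real.exp (-(m2k / M1)) := by
    have h1 : 1 - m2k / ((k : ℝ) * M1) ≤ Real.exp (-(m2k / ((k : ℝ) * M1))) := by
      have := Real.add_one_le_exp (-(m2k / ((k : ℝ) * M1)))
      linarith
    have h2 : (1 - m2k / ((k : ℝ) * M1)) ^ k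
        ≤ (Real.exp (-(m2k / ((k : ℝ) * M1)))) ^ k :=
      pow_le_pow_left₀ hr_nonneg h1 k
    have h3 : (Real.exp (-(m2k / ((k : ℝ) * M1)))) ^ k = Real.exp (-(m2k / M1)) := by
      rw [← Real.exp_nat_mul]
      congr 1
      field_simp
    rw [h3] at h2
    exact h2
  have hneg : 0 ≤ 0 - Lridge X y lam2 βstar := by linarith
  have h4 : (1 - m2k / ((k : ℝ) * M1)) ^ k * (0 - Lridge X y lam2 βstar)
      ≤ Real.exp (-(m2k / M1)) * (0 - Lridge X y lam2 βstar) :=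
    mul_le_mul_of_nonneg_right hrk hneg
  nlinarith [le_trans hfin h4]
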